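/- arXiv:1804.07930 — 3 statements merged into one kernel-verified Lean document; each statement's English description precedes it below -/
import Mathlib

section
/- Let s ∈ ℂ, let j be a nonnegative integer, and let z ∈ ℂ with Re(z) > 0. Then Σ_{ℓ=0}^{j} binom(j,ℓ) (−z/2)^ℓ K_{s+j+ℓ}(z) / Γ(s+ℓ+1) = (−z/2)^j K_s(z) / Γ(s+j+1). -/
/-!
Differentiating `exp (-z cosh t) sinh ((w + 1) t)`, using
`2 sinh t sinh ((w + 1) t) = cosh ((w + 2) t) - cosh (w t)` and integrating over `(0, ∞)` gives
the three-term recurrence `z/2 (K_{w+2} - K_w) = (w + 1) K_{w+1}`. The identity holds for every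
function of `w` satisfying this recurrence and `K_{-n} = K_n`: by induction on `j`, Pascal's rule
and `1/Γ(w) = w/Γ(w+1)` show that `s + j + 1` times the sum at rank `j + 1` is `-z/2` times the
sum at rank `j`. At the exceptional point `s = -(j + 1)` only the last term survives, since `1/Γ`
vanishes at the nonpositive integers, and the identity reduces to `K_{j+1} = K_{-(j+1)}`.
-/

open scoped Real Topology
open Complex MeasureTheory

/-- Modified Bessel function of the second kind, defined by its integral representation
(valid for `Re z > 0`). -/
noncomputable def besselK (s z : ℂ) : ℂ :=
  ∫ t in Set.Ioi (0 : ℝ), Complex.exp (-z * (Real.cosh t : ℂ)) * Complex.cosh (s * (t : ℂ))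

open Filter Finset

lemma Real.sq_div_four_le_cosh {t : ℝ} (ht : 0 ≤ t) : t ^ 2 / 4 ≤ Real.cosh t := by
  have := Real.quadratic_le_exp_of_nonneg ht
  rw [Real.cosh_eq]
  nlinarith [Real.exp_pos (-t)]

lemma Real.exp_neg_mul_cosh_add_mul_le {a : ℝ} (ha : 0 < a) (c : ℝ) {t : ℝ} (ht : 0 ≤ t) :
    Real.exp (-a * Real.cosh t + c * t) ≤ Real.exp ((c + 1) ^ 2 / a) * Real.exp (-t) := by
  rw [← Real.exp_add, Real.exp_le_exp]
  have hcosh := Real.sq_div_four_le_cosh ht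
  have hsq : 0 ≤ (a * t - 2 * (c + 1)) ^ 2 / (4 * a) := by positivity
  have key : (a * t - 2 * (c + 1)) ^ 2 / (4 * a) =
      a * t ^ 2 / 4 - (c + 1) * t + (c + 1) ^ 2 / a := by
    field_simp; ring
  nlinarith

lemma Complex.norm_cosh_le (u : ℂ) : ‖cosh u‖ ≤ Real.exp ‖u‖ := by
  rw [Complex.cosh, norm_div, RCLike.norm_ofNat]
  have := norm_add_le (exp u) (exp (-u))
  have h₁ := norm_exp_le_exp_norm u
  have h₂ := norm_exp_le_exp_norm (-u)
  rw [norm_neg] at h₂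
  linarith

lemma Complex.norm_sinh_le (u : ℂ) : ‖sinh u‖ ≤ Real.exp ‖u‖ := by
  rw [Complex.sinh, norm_div, RCLike.norm_ofNat]
  have := norm_sub_le (exp u) (exp (-u))
  have h₁ := norm_exp_le_exp_norm u
  have h₂ := norm_exp_le_exp_norm (-u)
  rw [norm_neg] at h₂
  linarith

lemma norm_cosh_mul_ofReal_le (w : ℂ) {t : ℝ} (ht : 0 ≤ t) :
    ‖cosh (w * t)‖ ≤ Real.exp (‖w‖ * t) := by
  simpa [Real.norm_of_nonneg ht] using norm_cosh_le (w * t)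

lemma norm_sinh_mul_ofReal_le (w : ℂ) {t : ℝ} (ht : 0 ≤ t) :
    ‖sinh (w * t)‖ ≤ Real.exp (‖w‖ * t) := by
  simpa [Real.norm_of_nonneg ht] using norm_sinh_le (w * t)

lemma norm_cexp_neg_mul_cosh (z : ℂ) (t : ℝ) :
    ‖exp (-z * Real.cosh t)‖ = Real.exp (-z.re * Real.cosh t) := by
  rw [norm_exp, re_mul_ofReal, neg_re]

lemma norm_cexp_neg_mul_cosh_mul_le {z : ℂ} (hz : 0 < z.re) {f : ℝ → ℂ} {c : ℝ}
    (hf : ∀ t, 0 ≤ t → ‖f t‖ ≤ Real.exp (c * t)) {t : ℝ} (ht : 0 ≤ t) :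
    ‖exp (-z * Real.cosh t) * f t‖ ≤ Real.exp ((c + 1) ^ 2 / z.re) * Real.exp (-t) := by
  calc ‖exp (-z * Real.cosh t) * f t‖
      ≤ Real.exp (-z.re * Real.cosh t) * Real.exp (c * t) := by
        rw [norm_mul, norm_cexp_neg_mul_cosh]
        gcongr
        exact hf t ht
    _ ≤ Real.exp ((c + 1) ^ 2 / z.re) * Real.exp (-t) := by
        rw [← Real.exp_add]
        exact Real.exp_neg_mul_cosh_add_mul_le hz c ht

lemma integrableOn_cexp_neg_mul_cosh_mul {z : ℂ} (hz : 0 < z.re) {f : ℝ → ℂ} {c : ℝ}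
    (hf : ∀ t, 0 ≤ t → ‖f t‖ ≤ Real.exp (c * t)) (hfc : Continuous f) :
    IntegrableOn (fun t : ℝ => exp (-z * Real.cosh t) * f t) (Set.Ioi 0) := by
  refine ((exp_neg_integrableOn_Ioi 0 one_pos).const_mul
    (Real.exp ((c + 1) ^ 2 / z.re))).mono' (by fun_prop) ?_
  filter_upwards [ae_restrict_mem measurableSet_Ioi] with t ht
  simpa using norm_cexp_neg_mul_cosh_mul_le hz hf (le_of_lt ht)

lemma tendsto_cexp_neg_mul_cosh_mul {z : ℂ} (hz : 0 < z.re) {f : ℝ → ℂ} {c : ℝ}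
    (hf : ∀ t, 0 ≤ t → ‖f t‖ ≤ Real.exp (c * t)) :
    Tendsto (fun t : ℝ => exp (-z * Real.cosh t) * f t) atTop (𝓝 0) := by
  refine squeeze_zero_norm' ?_
    (by simpa using Real.tendsto_exp_neg_atTop_nhds_zero.const_mul (Real.exp ((c + 1) ^ 2 / z.re)))
  filter_upwards [eventually_ge_atTop 0] with t ht
  exact norm_cexp_neg_mul_cosh_mul_le hz hf ht

lemma integrableOn_besselK_integrand {z : ℂ} (hz : 0 < z.re) (w : ℂ) :
    IntegrableOn (fun t : ℝ => exp (-z * Real.cosh t) * cosh (w * t)) (Set.Ioi 0) :=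
  integrableOn_cexp_neg_mul_cosh_mul hz (fun _ ht => norm_cosh_mul_ofReal_le w ht) (by fun_prop)

lemma Complex.two_mul_sinh_mul_sinh_add_one_mul (w u : ℂ) :
    2 * sinh u * sinh ((w + 1) * u) = cosh ((w + 2) * u) - cosh (w * u) := by
  rw [show (w + 2) * u = (w + 1) * u + u by ring, show w * u = (w + 1) * u - u by ring,
    cosh_add, cosh_sub]
  ring

lemma hasDerivAt_cexp_neg_mul_cosh_mul_sinh (z w : ℂ) (t : ℝ) :
    HasDerivAt (fun t : ℝ => exp (-z * Real.cosh t) * sinh ((w + 1) * t))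
      (z / 2 * (exp (-z * Real.cosh t) * cosh (w * t))
        - z / 2 * (exp (-z * Real.cosh t) * cosh ((w + 2) * t))
        + (w + 1) * (exp (-z * Real.cosh t) * cosh ((w + 1) * t))) t := by
  have hexp : HasDerivAt (fun t : ℝ => exp (-z * Real.cosh t))
      (exp (-z * Real.cosh t) * (-z * Real.sinh t)) t :=
    (((Real.hasDerivAt_cosh t).ofReal_comp).const_mul (-z)).cexp
  have hsinh : HasDerivAt (fun t : ℝ => sinh ((w + 1) * t)) (cosh ((w + 1) * t) * (w + 1)) t := by
    simpa using (((hasDerivAt_id (t : ℂ)).const_mul (w + 1)).csinh).comp_ofReal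
  refine (hexp.mul hsinh).congr_deriv ?_
  rw [ofReal_sinh]
  linear_combination -(z / 2 * exp (-z * Real.cosh t)) *
    Complex.two_mul_sinh_mul_sinh_add_one_mul w (t : ℂ)

theorem besselK_add_two_sub {z : ℂ} (hz : 0 < z.re) (w : ℂ) :
    z / 2 * (besselK (w + 2) z - besselK w z) = (w + 1) * besselK (w + 1) z := by
  have hG (v : ℂ) (c : ℂ) := (integrableOn_besselK_integrand hz v).const_mul c
  have hsinh : ∀ t : ℝ, 0 ≤ t → ‖sinh ((w + 1) * t)‖ ≤ Real.exp (‖w + 1‖ * t) :=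
    fun _ ht => norm_sinh_mul_ofReal_le (w + 1) ht
  -- integrate the derivative of `exp (-z cosh t) sinh ((w + 1) t)`, which vanishes at `0` and `∞`
  have hFTC := integral_Ioi_of_hasDerivAt_of_tendsto (by fun_prop : Continuous _).continuousWithinAt
    (fun t _ => hasDerivAt_cexp_neg_mul_cosh_mul_sinh z w t)
    (((hG w _).sub (hG (w + 2) _)).add (hG (w + 1) _))
    (tendsto_cexp_neg_mul_cosh_mul hz hsinh)
  rw [integral_add (by exact (hG w _).sub (hG (w + 2) _)) (hG (w + 1) _),
    integral_sub (hG w _) (hG (w + 2) _), integral_const_mul, integral_const_mul,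
    integral_const_mul] at hFTC
  simp only [ofReal_zero, mul_zero, sinh_zero, sub_zero] at hFTC
  unfold besselK
  linear_combination -hFTC

lemma besselK_neg (s z : ℂ) : besselK (-s) z = besselK s z := by
  simp only [besselK, neg_mul, cosh_neg]

lemma sum_choose_mul_cast_mul_eq_sum_choose_mul_sub_mul_succ (F : ℕ → ℂ) (j : ℕ) :
    ∑ l ∈ range (j + 1), (j.choose l : ℂ) * l * F l =
      ∑ l ∈ range (j + 1), (j.choose l : ℂ) * (j - l) * F (l + 1) := by
  rw [sum_range_succ', sum_range_succ]
  simp only [Nat.cast_zero, mul_zero, zero_mul, sub_self, add_zero]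
  refine sum_congr rfl fun l hl => ?_
  have h := congrArg (Nat.cast (R := ℂ)) (Nat.choose_succ_right_eq j l)
  push_cast [Nat.cast_sub (mem_range.1 hl).le] at h ⊢
  rw [h]

lemma add_mul_sum_range_choose_succ_mul (c : ℂ) (F : ℕ → ℂ) (j : ℕ) :
    (c + j + 1) * ∑ m ∈ range (j + 2), ((j + 1).choose m : ℂ) * F m =
      ∑ l ∈ range (j + 1),
        (j.choose l : ℂ) * ((c + j + l + 1) * F l + (c + l + 1) * F (l + 1)) := by
  have hpascal := sum_choose_succ_mul (fun m _ => F m) j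
  have hshift := sum_choose_mul_cast_mul_eq_sum_choose_mul_sub_mul_succ F j
  rw [hpascal, ← sub_eq_zero, ← sub_eq_zero_of_eq hshift.symm, mul_add, mul_sum, mul_sum,
    ← sum_add_distrib, ← sum_sub_distrib, ← sum_sub_distrib]
  refine sum_congr rfl fun l _ => ?_
  ring

lemma Complex.Gamma_neg_nat_add (n l : ℕ) (hl : l < n) : Gamma (-n + l + 1) = 0 := by
  have : (-n + l + 1 : ℂ) = -((n - (l + 1) : ℕ) : ℂ) := by
    push_cast [Nat.cast_sub (Nat.succ_le_of_lt hl)]; ring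
  rw [this, Gamma_neg_nat_eq_zero]

lemma sum_range_succ_div_Gamma_neg_nat_add (f : ℕ → ℂ) (n : ℕ) :
    ∑ l ∈ range (n + 1), f l / Gamma (-n + l + 1) = f n := by
  rw [sum_range_succ, sum_eq_zero fun l hl => ?_]
  · simp
  · rw [Gamma_neg_nat_add n l (mem_range.1 hl), div_zero]

lemma add_mul_sum_choose_succ_of_recurrence (K : ℂ → ℂ) (z : ℂ)
    (hrec : ∀ w, z / 2 * (K (w + 2) - K w) = (w + 1) * K (w + 1)) (s : ℂ) (j : ℕ) :
    (s + j + 1) * ∑ l ∈ range (j + 2), ((j + 1).choose l : ℂ) * (-z / 2) ^ l *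
        K (s + ((j + 1 : ℕ) : ℂ) + l) / Gamma (s + l + 1) =
      -z / 2 * ∑ l ∈ range (j + 1),
        (j.choose l : ℂ) * (-z / 2) ^ l * K (s + j + l) / Gamma (s + l + 1) := by
  have hpascal := add_mul_sum_range_choose_succ_mul s
    (fun l => (-z / 2) ^ l * K (s + ((j + 1 : ℕ) : ℂ) + l) / Gamma (s + l + 1)) j
  simp only [← mul_div_assoc, ← mul_assoc] at hpascal
  rw [hpascal, mul_sum]
  refine sum_congr rfl fun l _ => ?_
  have hw := hrec (s + j + l)
  have e₁ : s + ((j + 1 : ℕ) : ℂ) + l = s + j + l + 1 := by push_cast; ring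
  have e₂ : s + ((j + 1 : ℕ) : ℂ) + ((l + 1 : ℕ) : ℂ) = s + j + l + 2 := by
    push_cast; ring
  have e₃ : s + ((l + 1 : ℕ) : ℂ) + 1 = s + l + 1 + 1 := by push_cast; ring
  simp only [e₁, e₂, e₃, div_eq_mul_inv,
    one_div_Gamma_eq_self_mul_one_div_Gamma_add_one (s + l + 1)]
  linear_combination (-(j.choose l : ℂ) * (-z / 2) ^ l * (s + l + 1) *
    (Gamma (s + l + 1 + 1))⁻¹) * hw

theorem sum_choose_mul_div_Gamma_of_recurrence (K : ℂ → ℂ) (z : ℂ)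
    (hrec : ∀ w, z / 2 * (K (w + 2) - K w) = (w + 1) * K (w + 1))
    (heven : ∀ n : ℕ, K (-n) = K n) (s : ℂ) (j : ℕ) :
    ∑ l ∈ range (j + 1), (j.choose l : ℂ) * (-z / 2) ^ l * K (s + j + l) / Gamma (s + l + 1) =
      (-z / 2) ^ j * K s / Gamma (s + j + 1) := by
  induction j with
  | zero => simp
  | succ j ih =>
    rcases eq_or_ne (s + j + 1) 0 with hs | hs
    · obtain rfl : s = -((j + 1 : ℕ) : ℂ) := by push_cast; linear_combination hs
      rw [sum_range_succ_div_Gamma_neg_nat_add, heven]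
      simp
    · refine mul_left_cancel₀ hs ?_
      have e : s + ((j + 1 : ℕ) : ℂ) + 1 = s + j + 1 + 1 := by push_cast; ring
      rw [add_mul_sum_choose_succ_of_recurrence K z hrec, ih, e, div_eq_mul_inv, div_eq_mul_inv,
        one_div_Gamma_eq_self_mul_one_div_Gamma_add_one]
      ring

theorem stmt3 (s : ℂ) (j : ℕ) (z : ℂ) (hz : 0 < z.re) :
    (∑ l ∈ Finset.range (j + 1),
        (j.choose l : ℂ) * (-z / 2) ^ l * besselK (s + (j : ℂ) + (l : ℂ)) z /
          Complex.Gamma (s + (l : ℂ) + 1)) =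
      (-z / 2) ^ j * besselK s z / Complex.Gamma (s + (j : ℂ) + 1) :=
  sum_choose_mul_div_Gamma_of_recurrence (besselK · z) z (besselK_add_two_sub hz)
    (fun n => besselK_neg n z) s j
end

section
/- Let A ∈ ℂ ∖ (−∞, 0] with Re(A²) = 1/2, let x > 0, and let s ∈ ℂ. Then J_s(Ax) J_s(conj(A)x) = Σ_{n=0}^∞ (x|A|²/2)^{s+2n} / (n! Γ(s+n+1)) · J_{s+2n}(x), and likewise I_s(Ax) I_s(conj(A)x) = Σ_{n=0}^∞ (x|A|²/2)^{s+2n} / (n! Γ(s+n+1)) · I_{s+2n}(x), both series on the right-hand sides being absolutely convergent. -/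
open scoped Real Topology
open Complex

/-- Bessel function of the first kind, defined by its power series
(principal branch of complex powers). -/
noncomputable def besselJ (s z : ℂ) : ℂ :=
  ∑' k : ℕ, (-1) ^ k * (z / 2) ^ (s + 2 * (k : ℂ)) /
    ((k.factorial : ℂ) * Complex.Gamma (s + (k : ℂ) + 1))

/-- Modified Bessel function of the first kind, defined by its power series
(principal branch of complex powers). -/
noncomputable def besselI (s z : ℂ) : ℂ :=
  ∑' k : ℕ, (z / 2) ^ (s + 2 * (k : ℂ)) / ((k.factorial : ℂ) * Complex.Gamma (s + (k : ℂ) + 1))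


/-!
Write `J_s(z) = (z/2)^s Φ_s(-(z/2)^2)` and `I_s(z) = (z/2)^s Φ_s((z/2)^2)` with the entire function
`Φ_s(p) = Σ p^k / (k! Γ(s+k+1))`. The heart of the matter is the product formula
`Φ_s(P) Φ_s(Q) = Σ_n (PQ)^n / (n! Γ(s+n+1)) Φ_{s+2n}(P+Q)`, valid for all `s, P, Q`: comparing
coefficients of `P^j Q^k` reduces it to a Vandermonde-type identity for `1/Γ`, proved by induction
on `j` from `1/Γ(z) = z/Γ(z+1)`; absolute convergence of all the series comes from the
boundedness of `1/Γ(s+n)` in `n`. For `P = (Ax/2)^2`, `Q = (Āx/2)^2` the condition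
`Re(A^2) = 1/2` gives `P + Q = (x/2)^2`, and `(Ax/2)^s (Āx/2)^s = (x|A|^2/2)^s (x/2)^s` because
`Ax/2` is off the branch cut.
-/

open Finset
open scoped Nat

section Regrouping

variable {α β γ : Type*} [AddCommGroup α] [UniformSpace α] [IsUniformAddGroup α]
  [CompleteSpace α] [T2Space α]

theorem Summable.tsum_eq_tsum_sum_fiber {f : β → α} (hf : Summable f) (g : β → γ)
    (s : γ → Finset β) (hs : ∀ c, g ⁻¹' {c} = s c) :
    ∑' b, f b = ∑' c, ∑ b ∈ s c, f b := by
  refine (hf.hasSum.tsum_fiberwise g).tsum_eq.symm.trans (tsum_congr fun c => ?_)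
  rw [tsum_congr_set_coe f (hs c), Finset.tsum_subtype']

theorem Summable.tsum_eq_tsum_sum_antidiagonal {f : ℕ × ℕ → α} (hf : Summable f) :
    ∑' p, f p = ∑' m, ∑ p ∈ antidiagonal m, f p :=
  hf.tsum_eq_tsum_sum_fiber (fun p => p.1 + p.2) antidiagonal fun m => by ext; simp

theorem Summable.tsum_eq_tsum_sum_range_min {f : ℕ × ℕ × ℕ → α} (hf : Summable f) :
    ∑' t, f t = ∑' jk : ℕ × ℕ, ∑ n ∈ range (min jk.1 jk.2 + 1), f (n, jk.1 - n, jk.2 - n) := by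
  refine (hf.tsum_eq_tsum_sum_fiber (fun t => (t.1 + t.2.1, t.1 + t.2.2))
    (fun jk => (range (min jk.1 jk.2 + 1)).image fun n => (n, jk.1 - n, jk.2 - n))
    fun ⟨j, k⟩ => ?_).trans
    (tsum_congr fun jk => sum_image fun _ _ _ _ h => (Prod.ext_iff.1 h).1)
  ext ⟨n, i, l⟩
  simp only [Set.mem_preimage, Set.mem_singleton_iff, coe_image, Set.mem_image, coe_range,
    Set.mem_Iio, Prod.ext_iff]
  constructor
  · rintro ⟨rfl, rfl⟩; exact ⟨n, by omega, rfl, by omega, by omega⟩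
  · rintro ⟨m, hm, rfl, rfl, rfl⟩; omega

end Regrouping

theorem sum_antidiagonal_pow_div_factorial_mul {K : Type*} [Field K] [CharZero K] (x y : K)
    (m : ℕ) : ∑ p ∈ antidiagonal m, x ^ p.1 / p.1 ! * (y ^ p.2 / p.2 !) = (x + y) ^ m / m ! := by
  rw [(Commute.all x y).add_pow', sum_div]
  refine sum_congr rfl fun p hp => ?_
  rw [← mem_antidiagonal.mp hp, nsmul_eq_mul, Nat.cast_add_choose]
  have : ((p.1 + p.2)! : K) ≠ 0 := Nat.cast_ne_zero.2 (Nat.factorial_ne_zero _)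
  field_simp

theorem Nat.cast_choose_succ_mul_factorial {R : Type*} [CommRing R] (k n : ℕ) :
    (k.choose (n + 1) * (n + 1)! : R) = k.choose n * n ! * (k - n) := by
  rcases lt_or_ge n k with h | h
  · have := congrArg (Nat.cast (R := R)) (Nat.choose_succ_right_eq k n)
    push_cast [Nat.cast_sub h.le] at this
    rw [Nat.factorial_succ]
    push_cast
    linear_combination (n ! : R) * this
  · rw [Nat.choose_eq_zero_of_lt (by omega : k < n + 1)]
    rcases h.eq_or_lt with rfl | h
    · simp
    · simp [Nat.choose_eq_zero_of_lt h]

namespace Complex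

theorem inv_Gamma_eq_mul_inv_Gamma_add_one (z : ℂ) : (Gamma z)⁻¹ = z * (Gamma (z + 1))⁻¹ := by
  rcases eq_or_ne z 0 with rfl | hz
  · simp
  · rw [Gamma_add_one z hz, mul_inv, ← mul_assoc, mul_inv_cancel₀ hz, one_mul]

theorem exists_norm_inv_Gamma_add_nat_add_one_le (s : ℂ) :
    ∃ M, ∀ n : ℕ, ‖(Gamma (s + n + 1))⁻¹‖ ≤ M := by
  set u : ℕ → ℝ := fun n => ‖(Gamma (s + n + 1))⁻¹‖
  set N := ⌈‖s‖⌉₊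
  have step : ∀ n, N ≤ n → u (n + 1) ≤ u n := by
    intro n hn
    have h1 : 1 ≤ ‖s + n + 1‖ := by
      have hN : (⌈‖s‖⌉₊ : ℝ) ≤ n := by exact_mod_cast hn
      have h := norm_sub_le (s + n + 1) s
      rw [show s + n + 1 - s = ((n + 1 : ℕ) : ℂ) by push_cast; ring, norm_natCast] at h
      push_cast at h
      linarith [Nat.le_ceil ‖s‖]
    calc u (n + 1) ≤ ‖s + n + 1‖ * u (n + 1) := le_mul_of_one_le_left (norm_nonneg _) h1
      _ = u n := by
        simp only [u]
        rw [inv_Gamma_eq_mul_inv_Gamma_add_one (s + n + 1), norm_mul, Nat.cast_succ, ← add_assoc]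
  have tail : ∀ n, N ≤ n → u n ≤ u N := fun n hn => by
    induction n, hn using Nat.le_induction with
    | base => exact le_rfl
    | succ n hn ih => exact (step n hn).trans ih
  refine ⟨∑ i ∈ range (N + 1), u i, fun n => ?_⟩
  have hsingle : ∀ i ≤ N, u i ≤ ∑ i ∈ range (N + 1), u i := fun i hi =>
    single_le_sum (f := u) (fun i _ => norm_nonneg _) (mem_range.2 (Nat.lt_succ_of_le hi))
  rcases le_total n N with h | h
  · exact hsingle n h
  · exact (tail n h).trans (hsingle N le_rfl)

theorem sum_choose_succ_mul_inv_Gamma (s : ℂ) (j k : ℕ) :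
    ∑ n ∈ range (j + 2), ((j + 1).choose n * k.choose n * n ! : ℂ) * (Gamma (s + n + 1))⁻¹ =
      (s + k + 1) * ∑ n ∈ range (j + 1),
        (j.choose n * k.choose n * n ! : ℂ) * (Gamma (s + 1 + n + 1))⁻¹ := by
  set c : ℕ → ℂ := fun n => k.choose n * n ! * (Gamma (s + n + 1))⁻¹
  have hc : ∀ n : ℕ, (s + k + 1) * (k.choose n * n ! * (Gamma (s + 1 + n + 1))⁻¹) =
      c n + c (n + 1) := by
    intro n
    have e₁ : s + n + 1 + 1 = s + 1 + n + 1 := by ring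
    have e₂ : s + ((n + 1 : ℕ) : ℂ) + 1 = s + 1 + n + 1 := by push_cast; ring
    simp only [c, inv_Gamma_eq_mul_inv_Gamma_add_one (s + n + 1), e₁, e₂]
    linear_combination -(Gamma (s + 1 + n + 1))⁻¹ * Nat.cast_choose_succ_mul_factorial (R := ℂ) k n
  calc ∑ n ∈ range (j + 2), ((j + 1).choose n * k.choose n * n ! : ℂ) * (Gamma (s + n + 1))⁻¹
      = ∑ n ∈ range (j + 2), ((j + 1).choose n : ℂ) * c n :=
        sum_congr rfl fun n _ => by simp only [c]; ring
    _ = ∑ n ∈ range (j + 1), (j.choose n : ℂ) * (c n + c (n + 1)) := by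
        rw [sum_choose_succ_mul (fun n _ => c n) j, ← sum_add_distrib]
        simp only [mul_add]
    _ = _ := by
        rw [mul_sum]
        exact sum_congr rfl fun n _ => by rw [← hc]; ring

theorem inv_Gamma_mul_inv_Gamma (s : ℂ) (j k : ℕ) :
    (Gamma (s + j + 1))⁻¹ * (Gamma (s + k + 1))⁻¹ =
      (∑ n ∈ range (j + 1), (j.choose n * k.choose n * n ! : ℂ) * (Gamma (s + n + 1))⁻¹) *
        (Gamma (s + j + k + 1))⁻¹ := by
  induction j generalizing s with
  | zero => simp
  | succ j ih =>
    have e₁ : s + ((j + 1 : ℕ) : ℂ) + 1 = s + 1 + j + 1 := by push_cast; ring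
    have e₂ : s + ((j + 1 : ℕ) : ℂ) + k + 1 = s + 1 + j + k + 1 := by push_cast; ring
    rw [sum_choose_succ_mul_inv_Gamma, e₁, e₂, inv_Gamma_eq_mul_inv_Gamma_add_one (s + k + 1),
      mul_left_comm, show s + k + 1 + 1 = s + 1 + k + 1 by ring, ih, mul_assoc]

theorem inv_Gamma_div_factorial_mul_inv_Gamma_div_factorial (s : ℂ) (j k : ℕ) :
    (Gamma (s + j + 1))⁻¹ / j ! * ((Gamma (s + k + 1))⁻¹ / k !) =
      ∑ n ∈ range (min j k + 1),
        (Gamma (s + n + 1))⁻¹ * (Gamma (s + j + k + 1))⁻¹ / (n ! * (j - n)! * (k - n)!) := by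
  have hj : (j ! : ℂ) ≠ 0 := Nat.cast_ne_zero.2 (Nat.factorial_ne_zero j)
  have hk : (k ! : ℂ) ≠ 0 := Nat.cast_ne_zero.2 (Nat.factorial_ne_zero k)
  calc (Gamma (s + j + 1))⁻¹ / j ! * ((Gamma (s + k + 1))⁻¹ / k !)
      = ∑ n ∈ range (j + 1), (j.choose n * k.choose n * n ! / (j ! * k !) : ℂ) *
          ((Gamma (s + n + 1))⁻¹ * (Gamma (s + j + k + 1))⁻¹) := by
        rw [div_mul_div_comm, inv_Gamma_mul_inv_Gamma, sum_mul, sum_div]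
        exact sum_congr rfl fun n _ => by ring
    _ = ∑ n ∈ range (min j k + 1), (j.choose n * k.choose n * n ! / (j ! * k !) : ℂ) *
          ((Gamma (s + n + 1))⁻¹ * (Gamma (s + j + k + 1))⁻¹) := by
        refine (sum_subset (range_subset_range.2 (by omega)) fun n hj hmin => ?_).symm
        simp only [mem_range, not_lt] at hj hmin
        rw [Nat.choose_eq_zero_of_lt (n := k) (by omega)]
        simp
    _ = _ := sum_congr rfl fun n hn => by
        have hnj : n ≤ j := by simp at hn; omega
        have hnk : n ≤ k := by simp at hn; omega
        rw [Nat.cast_choose ℂ hnj, Nat.cast_choose ℂ hnk]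
        field_simp

end Complex

/-- The regularized confluent hypergeometric limit function `₀F̃₁(; s + 1; p)`. -/
noncomputable def reg0F1 (s p : ℂ) : ℂ :=
  ∑' k : ℕ, p ^ k / k ! * (Gamma (s + k + 1))⁻¹

theorem summable_norm_pow_div_factorial_mul_inv_Gamma (s p : ℂ) :
    Summable fun k : ℕ => ‖p ^ k / k ! * (Gamma (s + k + 1))⁻¹‖ := by
  obtain ⟨M, hM⟩ := exists_norm_inv_Gamma_add_nat_add_one_le s
  refine ((Real.summable_pow_div_factorial ‖p‖).mul_right M).of_nonneg_of_le
    (fun k => norm_nonneg _) fun k => ?_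
  rw [norm_mul, norm_div, norm_pow, norm_natCast]
  gcongr
  exact hM k

/-- Summing `reg0F1ProductTerm s P Q (n, i, l)` over `n + i = j`, `n + l = k` gives the `P^j Q^k`
term of `reg0F1 s P * reg0F1 s Q`; summing over `i + l = m`, then `m`, gives the `n`-th term of the
product formula `reg0F1_mul_reg0F1`. -/
noncomputable def reg0F1ProductTerm (s P Q : ℂ) (t : ℕ × ℕ × ℕ) : ℂ :=
  (P * Q) ^ t.1 / t.1 ! * (Gamma (s + t.1 + 1))⁻¹ *
    (P ^ t.2.1 / t.2.1 ! * (Q ^ t.2.2 / t.2.2 !) *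
      (Gamma (s + (2 * t.1 + t.2.1 + t.2.2 : ℕ) + 1))⁻¹)

theorem summable_norm_reg0F1ProductTerm (s P Q : ℂ) :
    Summable fun t => ‖reg0F1ProductTerm s P Q t‖ := by
  obtain ⟨M, hM⟩ := exists_norm_inv_Gamma_add_nat_add_one_le s
  have hM₀ : 0 ≤ M := (norm_nonneg _).trans (hM 0)
  have hPQ : Summable fun il : ℕ × ℕ => ‖P‖ ^ il.1 / il.1 ! * (‖Q‖ ^ il.2 / il.2 !) :=
    (Real.summable_pow_div_factorial _).mul_of_nonneg (Real.summable_pow_div_factorial _)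
      (fun _ => by positivity) fun _ => by positivity
  refine (((summable_norm_pow_div_factorial_mul_inv_Gamma s (P * Q)).mul_of_nonneg
    (hPQ.mul_right M) (fun _ => norm_nonneg _) fun _ => by positivity)).of_nonneg_of_le
    (fun t => norm_nonneg _) fun t => ?_
  rw [reg0F1ProductTerm, norm_mul]
  gcongr
  rw [norm_mul, norm_mul, norm_div, norm_div, norm_pow, norm_pow, norm_natCast, norm_natCast]
  gcongr
  exact hM _

theorem term_mul_term_eq_sum_reg0F1ProductTerm (s P Q : ℂ) (j k : ℕ) :
    P ^ j / j ! * (Gamma (s + j + 1))⁻¹ * (Q ^ k / k ! * (Gamma (s + k + 1))⁻¹) =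
      ∑ n ∈ range (min j k + 1), reg0F1ProductTerm s P Q (n, j - n, k - n) := by
  calc P ^ j / j ! * (Gamma (s + j + 1))⁻¹ * (Q ^ k / k ! * (Gamma (s + k + 1))⁻¹)
      = P ^ j * Q ^ k * ((Gamma (s + j + 1))⁻¹ / j ! * ((Gamma (s + k + 1))⁻¹ / k !)) := by ring
    _ = _ := by
      rw [inv_Gamma_div_factorial_mul_inv_Gamma_div_factorial, mul_sum]
      refine sum_congr rfl fun n hn => ?_
      obtain ⟨i, rfl⟩ : ∃ i, j = n + i := ⟨j - n, by simp at hn; omega⟩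
      obtain ⟨l, rfl⟩ : ∃ l, k = n + l := ⟨k - n, by simp at hn; omega⟩
      have e : s + ((n + i : ℕ) : ℂ) + ((n + l : ℕ) : ℂ) + 1 =
          s + ((2 * n + i + l : ℕ) : ℂ) + 1 := by push_cast; ring
      simp only [reg0F1ProductTerm, Nat.add_sub_cancel_left, e]
      ring

theorem reg0F1_mul_reg0F1_eq_tsum (s P Q : ℂ) :
    reg0F1 s P * reg0F1 s Q = ∑' t, reg0F1ProductTerm s P Q t := by
  rw [reg0F1, reg0F1, tsum_mul_tsum_of_summable_norm
    (summable_norm_pow_div_factorial_mul_inv_Gamma s P)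
    (summable_norm_pow_div_factorial_mul_inv_Gamma s Q),
    (summable_norm_reg0F1ProductTerm s P Q).of_norm.tsum_eq_tsum_sum_range_min]
  exact tsum_congr fun jk => term_mul_term_eq_sum_reg0F1ProductTerm s P Q jk.1 jk.2

theorem tsum_reg0F1ProductTerm_fst (s P Q : ℂ) (n : ℕ) :
    ∑' il : ℕ × ℕ, reg0F1ProductTerm s P Q (n, il) =
      (P * Q) ^ n / n ! * (Gamma (s + n + 1))⁻¹ * reg0F1 (s + 2 * n) (P + Q) := by
  rw [((summable_norm_reg0F1ProductTerm s P Q).of_norm.prod_factor n).tsum_eq_tsum_sum_antidiagonal,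
    reg0F1, ← tsum_mul_left]
  refine tsum_congr fun m => ?_
  rw [← sum_antidiagonal_pow_div_factorial_mul, sum_mul, mul_sum]
  refine sum_congr rfl fun il hil => ?_
  have e : s + ((2 * n + il.1 + il.2 : ℕ) : ℂ) + 1 = s + 2 * n + m + 1 := by
    rw [← mem_antidiagonal.mp hil]; push_cast; ring
  simp only [reg0F1ProductTerm, e]

theorem reg0F1_mul_reg0F1 (s P Q : ℂ) :
    (Summable fun n : ℕ =>
      ‖(P * Q) ^ n / n ! * (Gamma (s + n + 1))⁻¹ * reg0F1 (s + 2 * n) (P + Q)‖) ∧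
    reg0F1 s P * reg0F1 s Q =
      ∑' n : ℕ, (P * Q) ^ n / n ! * (Gamma (s + n + 1))⁻¹ * reg0F1 (s + 2 * n) (P + Q) := by
  have h := summable_norm_reg0F1ProductTerm s P Q
  simp only [← tsum_reg0F1ProductTerm_fst]
  refine ⟨h.prod.of_nonneg_of_le (fun _ => norm_nonneg _) fun n => ?_, ?_⟩
  · exact norm_tsum_le_tsum_norm (h.prod_factor n)
  · rw [reg0F1_mul_reg0F1_eq_tsum, h.of_norm.tsum_prod]

open ComplexConjugate

namespace Complex

theorem cpow_add_two_mul_natCast {z : ℂ} (hz : z ≠ 0) (s : ℂ) (k : ℕ) :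
    z ^ (s + 2 * k) = z ^ s * (z ^ 2) ^ k := by
  rw [cpow_add _ _ hz, show (2 * k : ℂ) = (2 * k : ℕ) by push_cast; ring, cpow_natCast, pow_mul]

theorem cpow_mul_conj_cpow {z : ℂ} (hz : z ≠ 0) (harg : z.arg ≠ π) (s : ℂ) :
    z ^ s * conj z ^ s = (normSq z : ℂ) ^ s := by
  have hconj : conj z ≠ 0 := (map_ne_zero _).2 hz
  have hnormSq : (normSq z : ℂ) ≠ 0 := ofReal_ne_zero.2 (normSq_pos.2 hz).ne'
  rw [cpow_def_of_ne_zero hz, cpow_def_of_ne_zero hconj, cpow_def_of_ne_zero hnormSq,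
    ← exp_add, ← add_mul, log_conj _ harg, add_conj, log_re, ← ofReal_log (normSq_nonneg z),
    normSq_eq_norm_sq, Real.log_pow]
  push_cast
  ring

end Complex

theorem besselJ_eq_cpow_mul_reg0F1 (s : ℂ) {z : ℂ} (hz : z ≠ 0) :
    besselJ s z = (z / 2) ^ s * reg0F1 s (-(z / 2) ^ 2) := by
  rw [besselJ, reg0F1, ← tsum_mul_left]
  refine tsum_congr fun k => ?_
  rw [cpow_add_two_mul_natCast (div_ne_zero hz two_ne_zero), neg_pow ((z / 2) ^ 2),
    div_mul_eq_div_div]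
  ring

theorem besselI_eq_cpow_mul_reg0F1 (s : ℂ) {z : ℂ} (hz : z ≠ 0) :
    besselI s z = (z / 2) ^ s * reg0F1 s ((z / 2) ^ 2) := by
  rw [besselI, reg0F1, ← tsum_mul_left]
  refine tsum_congr fun k => ?_
  rw [cpow_add_two_mul_natCast (div_ne_zero hz two_ne_zero), div_mul_eq_div_div]
  ring

section ConjugatePair

variable {A : ℂ} {x : ℝ}

theorem conj_mul_ofReal_div_two : conj A * x / 2 = conj (A * x / 2) := by
  simp [map_ofNat]

theorem mul_ofReal_div_two_sq_add_conj_sq (hA2 : (A ^ 2).re = 1 / 2) :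
    (A * x / 2) ^ 2 + (conj A * x / 2) ^ 2 = ((x : ℂ) / 2) ^ 2 := by
  have h : (A * x / 2) ^ 2 = A ^ 2 * ((x ^ 2 / 4 : ℝ) : ℂ) := by push_cast; ring
  rw [conj_mul_ofReal_div_two, ← map_pow, add_conj, h, re_mul_ofReal, hA2]
  push_cast
  ring

theorem normSq_mul_ofReal_div_two : normSq (A * x / 2) = x * ‖A‖ ^ 2 / 2 * (x / 2) := by
  rw [normSq_eq_norm_sq, norm_div, norm_mul, norm_real, Real.norm_eq_abs, RCLike.norm_ofNat]
  ring_nf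
  rw [sq_abs]

theorem mul_ofReal_div_two_cpow_mul_conj_cpow (hA : ¬(A.im = 0 ∧ A.re ≤ 0)) (hx : 0 < x) (s : ℂ) :
    (A * x / 2) ^ s * (conj A * x / 2) ^ s =
      ((x * ‖A‖ ^ 2 / 2 : ℝ) : ℂ) ^ s * ((x : ℂ) / 2) ^ s := by
  have hA₀ : A ≠ 0 := by rintro rfl; exact hA ⟨rfl, le_rfl⟩
  have harg : (A * x / 2).arg ≠ π := by
    rw [show A * x / 2 = ((x / 2 : ℝ) : ℂ) * A by push_cast; ring, arg_real_mul A (by positivity),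
      Ne, arg_eq_pi_iff]
    exact fun h => hA ⟨h.2, h.1.le⟩
  rw [conj_mul_ofReal_div_two, cpow_mul_conj_cpow (by simp [hA₀, hx.ne']) harg,
    normSq_mul_ofReal_div_two, ofReal_mul, mul_cpow_ofReal_nonneg (by positivity) (by positivity)]
  push_cast
  ring

end ConjugatePair

theorem summable_and_mul_conj_eq_tsum_of_eq_cpow_mul_reg0F1 {f : ℂ → ℂ → ℂ} {ε : ℂ}
    (hε : ε ^ 2 = 1) (hf : ∀ s z, z ≠ 0 → f s z = (z / 2) ^ s * reg0F1 s (ε * (z / 2) ^ 2))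
    {A : ℂ} (hA : ¬(A.im = 0 ∧ A.re ≤ 0)) (hA2 : (A ^ 2).re = 1 / 2) {x : ℝ} (hx : 0 < x)
    (s : ℂ) :
    (Summable fun n : ℕ => ‖((x * ‖A‖ ^ 2 / 2 : ℝ) : ℂ) ^ (s + 2 * n) /
      (n ! * Gamma (s + n + 1)) * f (s + 2 * n) x‖) ∧
    f s (A * x) * f s (conj A * x) = ∑' n : ℕ, ((x * ‖A‖ ^ 2 / 2 : ℝ) : ℂ) ^ (s + 2 * n) /
      (n ! * Gamma (s + n + 1)) * f (s + 2 * n) x := by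
  set C : ℂ := ((x * ‖A‖ ^ 2 / 2 : ℝ) : ℂ)
  set P := ε * (A * x / 2) ^ 2
  set Q := ε * (conj A * x / 2) ^ 2
  have hx₀ : (x : ℂ) ≠ 0 := ofReal_ne_zero.2 hx.ne'
  have hA₀ : A ≠ 0 := by rintro rfl; exact hA ⟨rfl, le_rfl⟩
  have hC : C ≠ 0 := ofReal_ne_zero.2 (by positivity)
  have hPQ : P * Q = (C * (x / 2)) ^ 2 := by
    rw [show P * Q = ε ^ 2 * ((A * x / 2) * (conj A * x / 2)) ^ 2 by ring, hε, one_mul,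
      conj_mul_ofReal_div_two, mul_conj, normSq_mul_ofReal_div_two]
    simp only [C]
    push_cast
    ring
  have hterm : ∀ n : ℕ, C ^ (s + 2 * n) / (n ! * Gamma (s + n + 1)) * f (s + 2 * n) x =
      C ^ s * (x / 2) ^ s *
        ((P * Q) ^ n / n ! * (Gamma (s + n + 1))⁻¹ * reg0F1 (s + 2 * n) (P + Q)) := by
    intro n
    rw [hf _ _ hx₀, cpow_add_two_mul_natCast hC, cpow_add_two_mul_natCast (by simpa using hx₀),
      ← mul_add, mul_ofReal_div_two_sq_add_conj_sq hA2, hPQ]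
    ring
  obtain ⟨hsum, heq⟩ := reg0F1_mul_reg0F1 s P Q
  refine ⟨(hsum.mul_left ‖C ^ s * (x / 2) ^ s‖).congr fun n => by
    rw [hterm, norm_mul (C ^ s * _)], ?_⟩
  rw [hf s _ (mul_ne_zero hA₀ hx₀), hf s _ (mul_ne_zero ((map_ne_zero _).2 hA₀) hx₀),
    tsum_congr hterm, tsum_mul_left, ← heq, ← mul_ofReal_div_two_cpow_mul_conj_cpow hA hx]
  ring

theorem stmt4 (A : ℂ) (hA : ¬(A.im = 0 ∧ A.re ≤ 0)) (hA2 : (A ^ 2).re = 1 / 2)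
    (x : ℝ) (hx : 0 < x) (s : ℂ) :
    (Summable fun n : ℕ =>
      ‖(((x * ‖A‖ ^ 2 / 2 : ℝ) : ℂ)) ^ (s + 2 * (n : ℂ)) /
          ((n.factorial : ℂ) * Complex.Gamma (s + (n : ℂ) + 1)) *
        besselJ (s + 2 * (n : ℂ)) (x : ℂ)‖) ∧
    besselJ s (A * (x : ℂ)) * besselJ s ((starRingEnd ℂ) A * (x : ℂ)) =
      ∑' n : ℕ, (((x * ‖A‖ ^ 2 / 2 : ℝ) : ℂ)) ^ (s + 2 * (n : ℂ)) /
          ((n.factorial : ℂ) * Complex.Gamma (s + (n : ℂ) + 1)) *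
        besselJ (s + 2 * (n : ℂ)) (x : ℂ) ∧
    (Summable fun n : ℕ =>
      ‖(((x * ‖A‖ ^ 2 / 2 : ℝ) : ℂ)) ^ (s + 2 * (n : ℂ)) /
          ((n.factorial : ℂ) * Complex.Gamma (s + (n : ℂ) + 1)) *
        besselI (s + 2 * (n : ℂ)) (x : ℂ)‖) ∧
    besselI s (A * (x : ℂ)) * besselI s ((starRingEnd ℂ) A * (x : ℂ)) =
      ∑' n : ℕ, (((x * ‖A‖ ^ 2 / 2 : ℝ) : ℂ)) ^ (s + 2 * (n : ℂ)) /
          ((n.factorial : ℂ) * Complex.Gamma (s + (n : ℂ) + 1)) *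
        besselI (s + 2 * (n : ℂ)) (x : ℂ) := by
  obtain ⟨hJ_summable, hJ⟩ := summable_and_mul_conj_eq_tsum_of_eq_cpow_mul_reg0F1 (f := besselJ)
    (ε := -1) (by norm_num) (fun s z hz => by rw [besselJ_eq_cpow_mul_reg0F1 s hz, neg_one_mul])
    hA hA2 hx s
  obtain ⟨hI_summable, hI⟩ := summable_and_mul_conj_eq_tsum_of_eq_cpow_mul_reg0F1 (f := besselI)
    (ε := 1) (one_pow 2) (fun s z hz => by rw [besselI_eq_cpow_mul_reg0F1 s hz, one_mul])
    hA hA2 hx s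
  exact ⟨hJ_summable, hJ, hI_summable, hI⟩
end

section
/- Let C ⊂ {s ∈ ℂ : Re(s) > −1/2} be a compact set. Then there exists M > 0 such that for all s ∈ C and all z ∈ ℂ ∖ {0}: |𝒥_s(z)| ≤ M |z|^{Re(s)} whenever 0 < |z| ≤ 1, and |𝒥_s(z)| ≤ M e^{8π√|z|} |z|^{Re(s)} whenever |z| > 1. -/
open scoped Real Topology
open Complex

/-- The function `𝒥_s(z)`, built out of `J_s` (for `Re z ≥ 0`) and `I_s` (for `Re z ≤ 0`),
with the principal branch of the square root. -/
noncomputable def calJ (s z : ℂ) : ℂ :=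
  if 0 ≤ z.re then
    besselJ s (4 * (π : ℂ) * z ^ (1 / 2 : ℂ)) *
      besselJ s (4 * (π : ℂ) * ((starRingEnd ℂ) z) ^ (1 / 2 : ℂ))
  else
    besselI s (4 * (π : ℂ) * (-z) ^ (1 / 2 : ℂ)) *
      besselI s (4 * (π : ℂ) * (-((starRingEnd ℂ) z)) ^ (1 / 2 : ℂ))

/-!
Since `Γ(s + k + 1) = (s + k) ⋯ (s + 1) Γ(s + 1)` and `‖s + j + 1‖ ≥ j + 1/2` when `Re s > -1/2`,
one has `k! ‖Γ(s + k + 1)‖ ≥ ‖Γ(s + 1)‖ (2k)! / 4^k`. Hence both Bessel series are dominated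
termwise by `‖(w/2)^s‖ / ‖Γ(s + 1)‖ · ‖w‖^(2k) / (2k)!`, whose sum is a multiple of `cosh ‖w‖ ≤ exp ‖w‖`.
At `w = 4π√u` with `‖u‖ = ‖z‖` this gives `‖z‖^(Re s / 2) e^(4π√‖z‖)` per factor of `𝒥_s(z)`,
times a constant depending continuously on `s` (as `1 / Γ` is entire), hence bounded on `C`.
-/

open scoped Nat

lemma norm_cpow_le_rpow_mul_exp (z w : ℂ) :
    ‖z ^ w‖ ≤ ‖z‖ ^ w.re * Real.exp (π * |w.im|) := by
  refine (norm_cpow_le z w).trans ?_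
  rw [div_eq_mul_inv, ← Real.exp_neg]
  gcongr
  calc -(arg z * w.im) ≤ |arg z| * |w.im| := abs_mul (arg z) w.im ▸ neg_le_abs _
    _ ≤ π * |w.im| := by gcongr; exact abs_arg_le_pi z

lemma Real.cosh_le_exp_of_nonneg {r : ℝ} (hr : 0 ≤ r) : Real.cosh r ≤ Real.exp r := by
  rw [Real.cosh_eq]
  linarith [Real.exp_le_exp.2 (neg_le_self hr)]

lemma norm_Gamma_mul_factorial_le {s : ℂ} (hs : -(1 / 2 : ℝ) < s.re) (k : ℕ) :
    ‖Gamma (s + 1)‖ * (2 * k)! ≤ 4 ^ k * k ! * ‖Gamma (s + k + 1)‖ := by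
  induction k with
  | zero => simp
  | succ k ih =>
    have hre : (k : ℝ) + 1 / 2 < (s + k + 1).re := by simp; linarith
    have hshift : Gamma (s + ↑(k + 1) + 1) = (s + k + 1) * Gamma (s + k + 1) := by
      rw [← Gamma_add_one _ (fun h => by simp [h] at hre; linarith)]
      push_cast; ring_nf
    calc ‖Gamma (s + 1)‖ * (2 * (k + 1))!
        = (2 * k + 1) * (2 * k + 2) * (‖Gamma (s + 1)‖ * (2 * k)!) := by
          rw [show 2 * (k + 1) = 2 * k + 1 + 1 by ring, Nat.factorial_succ, Nat.factorial_succ]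
          push_cast; ring
      _ ≤ (2 * k + 1) * (2 * k + 2) * (4 ^ k * k ! * ‖Gamma (s + k + 1)‖) := by gcongr
      _ = 4 ^ (k + 1) * (k + 1)! * (((k : ℝ) + 1 / 2) * ‖Gamma (s + k + 1)‖) := by
          push_cast [Nat.factorial_succ]; ring
      _ ≤ 4 ^ (k + 1) * (k + 1)! * ‖Gamma (s + ↑(k + 1) + 1)‖ := by
          rw [hshift, norm_mul]
          gcongr
          exact hre.le.trans (re_le_norm _)

noncomputable def besselTerm (s w : ℂ) (k : ℕ) : ℂ :=
  (w / 2) ^ (s + 2 * (k : ℂ)) / ((k.factorial : ℂ) * Gamma (s + (k : ℂ) + 1))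

lemma norm_besselTerm_le {s : ℂ} (hs : -(1 / 2 : ℝ) < s.re) {w : ℂ} (hw : w ≠ 0) (k : ℕ) :
    ‖besselTerm s w k‖ ≤ ‖(w / 2) ^ s‖ / ‖Gamma (s + 1)‖ * (‖w‖ ^ (2 * k) / (2 * k)!) := by
  have hpow : (w / 2) ^ (s + 2 * (k : ℂ)) = (w / 2) ^ s * (w / 2) ^ (2 * k) := by
    rw [cpow_add _ _ (div_ne_zero hw two_ne_zero)]
    norm_cast
  have hΓ : 0 < ‖Gamma (s + 1)‖ := norm_pos_iff.2 (Gamma_ne_zero_of_re_pos (by simp; linarith))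
  calc ‖besselTerm s w k‖
      = ‖(w / 2) ^ s‖ * ‖w‖ ^ (2 * k) / (4 ^ k * k ! * ‖Gamma (s + k + 1)‖) := by
        rw [besselTerm, hpow]
        simp only [pow_mul, div_pow, norm_div, norm_mul, norm_pow, norm_ofNat,
          RCLike.norm_natCast]
        ring
    _ ≤ ‖(w / 2) ^ s‖ * ‖w‖ ^ (2 * k) / (‖Gamma (s + 1)‖ * (2 * k)!) :=
        div_le_div_of_nonneg_left (by positivity) (by positivity)
          (norm_Gamma_mul_factorial_le hs k)
    _ = ‖(w / 2) ^ s‖ / ‖Gamma (s + 1)‖ * (‖w‖ ^ (2 * k) / (2 * k)!) := by ring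

noncomputable def besselMajorant (s w : ℂ) : ℝ :=
  ‖(w / 2) ^ s‖ / ‖Gamma (s + 1)‖ * Real.cosh ‖w‖

lemma norm_tsum_le_of_norm_le_besselTerm {s : ℂ} (hs : -(1 / 2 : ℝ) < s.re) {w : ℂ}
    (hw : w ≠ 0) {f : ℕ → ℂ} (hf : ∀ k, ‖f k‖ ≤ ‖besselTerm s w k‖) :
    ‖∑' k, f k‖ ≤ besselMajorant s w :=
  tsum_of_norm_bounded ((Real.hasSum_cosh ‖w‖).mul_left _)
    fun k => (hf k).trans (norm_besselTerm_le hs hw k)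

lemma norm_besselJ_le {s : ℂ} (hs : -(1 / 2 : ℝ) < s.re) {w : ℂ} (hw : w ≠ 0) :
    ‖besselJ s w‖ ≤ besselMajorant s w :=
  norm_tsum_le_of_norm_le_besselTerm hs hw fun k => by
    rw [mul_div_assoc, norm_mul, norm_pow, norm_neg, norm_one, one_pow, one_mul, besselTerm]

lemma norm_besselI_le {s : ℂ} (hs : -(1 / 2 : ℝ) < s.re) {w : ℂ} (hw : w ≠ 0) :
    ‖besselI s w‖ ≤ besselMajorant s w :=
  norm_tsum_le_of_norm_le_besselTerm hs hw fun _ => le_rfl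

-- Written with `(Gamma (s + 1))⁻¹` so that continuity in `s` follows from `1 / Γ` being entire.
noncomputable def besselConst (s : ℂ) : ℝ :=
  (2 * π) ^ s.re * Real.exp (π * |s.im|) * ‖(Gamma (s + 1))⁻¹‖

lemma continuous_besselConst : Continuous besselConst := by
  unfold besselConst
  have : Continuous fun s : ℂ => (Gamma (s + 1))⁻¹ :=
    differentiable_one_div_Gamma.continuous.comp (continuous_add_const 1)
  fun_prop (disch := positivity)

lemma norm_four_pi_mul_cpow_half (u : ℂ) : ‖4 * (π : ℂ) * u ^ (1 / 2 : ℂ)‖ = 4 * π * √‖u‖ := by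
  rw [norm_mul, norm_mul, show (1 / 2 : ℂ) = ((1 / 2 : ℝ) : ℂ) by norm_num, norm_cpow_real,
    Real.sqrt_eq_rpow]
  simp [abs_of_pos Real.pi_pos]

lemma besselMajorant_four_pi_mul_cpow_half_le (s u : ℂ) :
    besselMajorant s (4 * (π : ℂ) * u ^ (1 / 2 : ℂ)) ≤
      besselConst s * √‖u‖ ^ s.re * Real.exp (4 * π * √‖u‖) := by
  have hhalf : ‖4 * (π : ℂ) * u ^ (1 / 2 : ℂ) / 2‖ = 2 * π * √‖u‖ := by
    rw [norm_div, norm_four_pi_mul_cpow_half]; norm_num; ring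
  rw [besselMajorant, norm_four_pi_mul_cpow_half, besselConst, norm_inv, div_eq_mul_inv]
  calc _ ≤ (2 * π * √‖u‖) ^ s.re * Real.exp (π * |s.im|) * ‖Gamma (s + 1)‖⁻¹ *
        Real.exp (4 * π * √‖u‖) := by
        gcongr
        · exact hhalf ▸ norm_cpow_le_rpow_mul_exp _ s
        · exact Real.cosh_le_exp_of_nonneg (by positivity)
    _ = _ := by rw [Real.mul_rpow (by positivity) (by positivity)]; ring

lemma norm_besselJ_sqrt_le {s : ℂ} (hs : -(1 / 2 : ℝ) < s.re) {u : ℂ} (hu : u ≠ 0) :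
    ‖besselJ s (4 * (π : ℂ) * u ^ (1 / 2 : ℂ))‖ ≤
      besselConst s * √‖u‖ ^ s.re * Real.exp (4 * π * √‖u‖) :=
  (norm_besselJ_le hs (by simp [cpow_eq_zero_iff, hu, Real.pi_ne_zero])).trans
    (besselMajorant_four_pi_mul_cpow_half_le s u)

lemma norm_besselI_sqrt_le {s : ℂ} (hs : -(1 / 2 : ℝ) < s.re) {u : ℂ} (hu : u ≠ 0) :
    ‖besselI s (4 * (π : ℂ) * u ^ (1 / 2 : ℂ))‖ ≤
      besselConst s * √‖u‖ ^ s.re * Real.exp (4 * π * √‖u‖) :=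
  (norm_besselI_le hs (by simp [cpow_eq_zero_iff, hu, Real.pi_ne_zero])).trans
    (besselMajorant_four_pi_mul_cpow_half_le s u)

lemma norm_calJ_le {s : ℂ} (hs : -(1 / 2 : ℝ) < s.re) {z : ℂ} (hz : z ≠ 0) :
    ‖calJ s z‖ ≤ besselConst s ^ 2 * Real.exp (8 * π * √‖z‖) * ‖z‖ ^ s.re := by
  set b := besselConst s * √‖z‖ ^ s.re * Real.exp (4 * π * √‖z‖)
  have hb : 0 ≤ b := (norm_nonneg _).trans (norm_besselJ_sqrt_le hs hz)
  have hsq : b * b = besselConst s ^ 2 * Real.exp (8 * π * √‖z‖) * ‖z‖ ^ s.re := by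
    have hpow : ‖z‖ ^ s.re = √‖z‖ ^ s.re * √‖z‖ ^ s.re := by
      rw [← Real.mul_rpow (by positivity) (by positivity), Real.mul_self_sqrt (norm_nonneg z)]
    rw [hpow, show 8 * π * √‖z‖ = 4 * π * √‖z‖ + 4 * π * √‖z‖ by ring, Real.exp_add]
    ring
  unfold calJ
  split_ifs
  · rw [norm_mul, ← hsq]
    refine mul_le_mul (norm_besselJ_sqrt_le hs hz) ?_ (norm_nonneg _) hb
    simpa using norm_besselJ_sqrt_le hs (u := (starRingEnd ℂ) z) (by simpa)
  · rw [norm_mul, ← hsq]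
    refine mul_le_mul ?_ ?_ (norm_nonneg _) hb
    · simpa using norm_besselI_sqrt_le hs (u := -z) (by simpa)
    · simpa using norm_besselI_sqrt_le hs (u := -(starRingEnd ℂ) z) (by simpa)

theorem stmt5 (C : Set ℂ) (hC : IsCompact C) (hCre : ∀ s ∈ C, -(1 / 2 : ℝ) < s.re) :
    ∃ M : ℝ, 0 < M ∧ ∀ s ∈ C, ∀ z : ℂ, z ≠ 0 →
      (‖z‖ ≤ 1 → ‖calJ s z‖ ≤ M * ‖z‖ ^ s.re) ∧
      (1 < ‖z‖ →
        ‖calJ s z‖ ≤ M * Real.exp (8 * π * Real.sqrt (‖z‖)) * ‖z‖ ^ s.re) := by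
  obtain ⟨B, hB⟩ := hC.exists_bound_of_continuousOn continuous_besselConst.continuousOn
  refine ⟨(B ^ 2 + 1) * Real.exp (8 * π), by positivity, fun s hs z hz => ?_⟩
  have hconst : besselConst s ^ 2 ≤ B ^ 2 + 1 := by
    have := pow_le_pow_left₀ (abs_nonneg _) (hB s hs) 2
    rw [Real.norm_eq_abs, sq_abs] at this
    linarith
  have hbound : ‖calJ s z‖ ≤ (B ^ 2 + 1) * Real.exp (8 * π * √‖z‖) * ‖z‖ ^ s.re :=
    (norm_calJ_le (hCre s hs) hz).trans (by gcongr)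
  refine ⟨fun hz1 => hbound.trans ?_, fun _ => hbound.trans ?_⟩
  · have hexp : Real.exp (8 * π * √‖z‖) ≤ Real.exp (8 * π) :=
      Real.exp_le_exp.2 (mul_le_of_le_one_right (by positivity) (Real.sqrt_le_one.2 hz1))
    gcongr
  · gcongr
    exact le_mul_of_one_le_right (by positivity) (Real.one_le_exp (by positivity))
end
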